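/- arXiv:1908.05495 — 2 statements merged into one kernel-verified Lean document; each statement's English description precedes it below -/
import Mathlib

section
/- Let u₁, u₂ be two ensembles of J vectors in ℝ^M, each contained in the ball B_R(u*), and let 𝒢 : ℝ^M → ℝ^L be Lipschitz with constant C_𝒢. Then the empirical cross-covariances satisfy ‖C^{up}(u₁) − C^{up}(u₂)‖₂ ≤ 2(J+1)(m C_𝒢 + M) · (1/J) Σ_j ‖u₁^(j) − u₂^(j)‖₂, where m = R + ‖u*‖₂ and M = C_𝒢 R + ‖𝒢(u*)‖₂. -/
/-! The cross-covariance is the ensemble mean of the outer products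
`(u⁽ʲ⁾ - ū) (𝒢(u⁽ʲ⁾) - 𝒢̄)ᵀ`, and an outer product `a bᵀ` has spectral norm at most `‖a‖ ‖b‖`.
Splitting `a₁ b₁ᵀ - a₂ b₂ᵀ = (a₁ - a₂) b₁ᵀ + a₂ (b₁ - b₂)ᵀ`, the centred vectors are bounded by
`2m` and `2M`, and the differences of centred vectors by `‖u₁⁽ʲ⁾ - u₂⁽ʲ⁾‖` plus the mean distance
(times `C_𝒢` on the `𝒢` side). Averaging over `j` gives `4 (m C_𝒢 + M)` times the mean distance,
and `4 ≤ 2 (J + 1)`. -/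

open scoped Matrix.Norms.L2Operator

open WithLp

namespace Matrix

variable {𝕜 m n : Type*} [RCLike 𝕜] [Fintype m] [Fintype n] [DecidableEq n]

lemma l2_opNorm_vecMulVec_le (a : EuclideanSpace 𝕜 m) (b : EuclideanSpace 𝕜 n) :
    ‖vecMulVec (ofLp a) (ofLp b)‖ ≤ ‖a‖ * ‖b‖ := by
  rw [l2_opNorm_def]
  refine ContinuousLinearMap.opNorm_le_bound _ (by positivity) fun x => ?_
  have hx : ((toEuclideanLin.trans LinearMap.toContinuousLinearMap)
      (vecMulVec (ofLp a) (ofLp b))) x = (ofLp b ⬝ᵥ ofLp x) • a := by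
    ext i
    simp [vecMulVec_mulVec, mul_comm]
  have hcs : ‖ofLp b ⬝ᵥ ofLp x‖ ≤ ‖b‖ * ‖x‖ := by
    have := norm_inner_le_norm (𝕜 := 𝕜) (WithLp.toLp 2 (star (ofLp b))) x
    rw [EuclideanSpace.inner_eq_star_dotProduct] at this
    simpa [dotProduct_comm, EuclideanSpace.norm_eq] using this
  rw [hx, norm_smul]
  calc ‖ofLp b ⬝ᵥ ofLp x‖ * ‖a‖ ≤ ‖b‖ * ‖x‖ * ‖a‖ := by gcongr
    _ = ‖a‖ * ‖b‖ * ‖x‖ := by ring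

lemma norm_vecMulVec_sub_vecMulVec_le (a a' : EuclideanSpace 𝕜 m) (b b' : EuclideanSpace 𝕜 n) :
    ‖vecMulVec (ofLp a) (ofLp b) - vecMulVec (ofLp a') (ofLp b')‖ ≤
      ‖a - a'‖ * ‖b‖ + ‖a'‖ * ‖b - b'‖ := by
  have hsplit : vecMulVec (ofLp a) (ofLp b) - vecMulVec (ofLp a') (ofLp b') =
      vecMulVec (ofLp (a - a')) (ofLp b) + vecMulVec (ofLp a') (ofLp (b - b')) := by
    rw [ofLp_sub, ofLp_sub, sub_vecMulVec, vecMulVec_sub]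
    abel
  rw [hsplit]
  exact (norm_add_le _ _).trans
    (add_le_add (l2_opNorm_vecMulVec_le _ _) (l2_opNorm_vecMulVec_le _ _))

end Matrix

section Ensemble

variable {E : Type*} {J : ℕ}

noncomputable def ensembleMean [AddCommGroup E] [Module ℝ E] (x : Fin J → E) : E :=
  (J : ℝ)⁻¹ • ∑ j, x j

section Module

variable [AddCommGroup E] [Module ℝ E]

lemma ensembleMean_add (x y : Fin J → E) :
    ensembleMean (fun j => x j + y j) = ensembleMean x + ensembleMean y := by
  simp only [ensembleMean, Finset.sum_add_distrib, smul_add]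

lemma ensembleMean_sub (x y : Fin J → E) :
    ensembleMean x - ensembleMean y = ensembleMean (fun j => x j - y j) := by
  simp only [ensembleMean, Finset.sum_sub_distrib, smul_sub]

lemma ensembleMean_smul (c : ℝ) (x : Fin J → E) :
    ensembleMean (fun j => c • x j) = c • ensembleMean x := by
  simp only [ensembleMean, ← Finset.smul_sum, smul_comm c]

lemma ensembleMean_const (hJ : 0 < J) (c : E) : ensembleMean (fun _ : Fin J => c) = c := by
  rw [ensembleMean, Finset.sum_const, Finset.card_univ, Fintype.card_fin,
    ← Nat.cast_smul_eq_nsmul ℝ, smul_smul, inv_mul_cancel₀ (by positivity), one_smul]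

end Module

variable [NormedAddCommGroup E] [NormedSpace ℝ E]

lemma norm_ensembleMean_le_of_le {x : Fin J → E} {c : Fin J → ℝ} (h : ∀ j, ‖x j‖ ≤ c j) :
    ‖ensembleMean x‖ ≤ ensembleMean c := by
  rw [ensembleMean, ensembleMean, norm_smul, Real.norm_of_nonneg (by positivity), smul_eq_mul]
  gcongr
  exact (norm_sum_le _ _).trans (Finset.sum_le_sum fun j _ => h j)

lemma norm_sub_ensembleMean_le {x : Fin J → E} {r : ℝ} (hx : ∀ j, ‖x j‖ ≤ r) (j : Fin J) :
    ‖x j - ensembleMean x‖ ≤ 2 * r := by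
  have hmean : ‖ensembleMean x‖ ≤ r :=
    (norm_ensembleMean_le_of_le hx).trans_eq (ensembleMean_const (Fin.pos j) r)
  linarith [norm_sub_le (x j) (ensembleMean x), hx j]

end Ensemble

open Matrix

noncomputable def crossCovariance {m n : Type*} {J : ℕ} (u : Fin J → EuclideanSpace ℝ m)
    (v : Fin J → EuclideanSpace ℝ n) : Matrix m n ℝ :=
  ensembleMean fun j => vecMulVec (ofLp (u j - ensembleMean u)) (ofLp (v j - ensembleMean v))

lemma norm_crossCovariance_sub_le {m n : Type*} [Fintype m] [Fintype n] [DecidableEq n] {J : ℕ}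
    (hJ : 0 < J) {u₁ u₂ : Fin J → EuclideanSpace ℝ m} {v₁ v₂ : Fin J → EuclideanSpace ℝ n}
    {r s C : ℝ} (hu₂ : ∀ j, ‖u₂ j‖ ≤ r) (hv₁ : ∀ j, ‖v₁ j‖ ≤ s)
    (hv : ∀ j, ‖v₁ j - v₂ j‖ ≤ C * ‖u₁ j - u₂ j‖) :
    ‖crossCovariance u₁ v₁ - crossCovariance u₂ v₂‖ ≤
      4 * (r * C + s) * ensembleMean fun j => ‖u₁ j - u₂ j‖ := by
  set d := fun j => ‖u₁ j - u₂ j‖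
  set D := ensembleMean d
  have hdu : ∀ j, ‖(u₁ j - ensembleMean u₁) - (u₂ j - ensembleMean u₂)‖ ≤ d j + D := fun j => by
    rw [sub_sub_sub_comm, ensembleMean_sub]
    exact (norm_sub_le _ _).trans (add_le_add le_rfl (norm_ensembleMean_le_of_le fun _ => le_rfl))
  have hdv : ∀ j, ‖(v₁ j - ensembleMean v₁) - (v₂ j - ensembleMean v₂)‖ ≤ C * (d j + D) :=
    fun j => by
    rw [sub_sub_sub_comm, ensembleMean_sub, mul_add, ← smul_eq_mul C D, ← ensembleMean_smul]
    exact (norm_sub_le _ _).trans (add_le_add (hv j) (norm_ensembleMean_le_of_le hv))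
  have hterm : ∀ j, ‖vecMulVec (ofLp (u₁ j - ensembleMean u₁)) (ofLp (v₁ j - ensembleMean v₁)) -
      vecMulVec (ofLp (u₂ j - ensembleMean u₂)) (ofLp (v₂ j - ensembleMean v₂))‖ ≤
        (2 * (r * C + s)) • (d j + D) := fun j => by
    refine (norm_vecMulVec_sub_vecMulVec_le _ _ _ _).trans ?_
    calc _ ≤ (d j + D) * (2 * s) + 2 * r * (C * (d j + D)) := by
          gcongr ?_ + ?_
          · exact mul_le_mul (hdu j) (norm_sub_ensembleMean_le hv₁ j) (norm_nonneg _)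
              ((norm_nonneg _).trans (hdu j))
          · exact mul_le_mul (norm_sub_ensembleMean_le hu₂ j) (hdv j) (norm_nonneg _)
              ((norm_nonneg _).trans (norm_sub_ensembleMean_le hu₂ j))
      _ = (2 * (r * C + s)) • (d j + D) := by rw [smul_eq_mul]; ring
  calc ‖crossCovariance u₁ v₁ - crossCovariance u₂ v₂‖
      ≤ ensembleMean fun j => (2 * (r * C + s)) • (d j + D) := by
        rw [crossCovariance, crossCovariance, ensembleMean_sub]
        exact norm_ensembleMean_le_of_le hterm
    _ = 4 * (r * C + s) * D := by
        rw [ensembleMean_smul, ensembleMean_add, ensembleMean_const hJ, smul_eq_mul]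
        ring

lemma subsingleton_of_norm_sub_le_mul_of_neg {X Y : Type*} [NormedAddCommGroup X]
    [SeminormedAddCommGroup Y] {f : X → Y} {C : ℝ} (hC : C < 0)
    (hf : ∀ x y, ‖f x - f y‖ ≤ C * ‖x - y‖) : Subsingleton X where
  allEq x y := by
    have hxy : ‖x - y‖ ≤ 0 := by nlinarith [hf x y, norm_nonneg (f x - f y), norm_nonneg (x - y)]
    exact sub_eq_zero.mp (norm_le_zero_iff.mp hxy)

theorem cross_covariance_lipschitz {J M L : ℕ} (hJ : 0 < J)
    (u₁ u₂ : Fin J → EuclideanSpace ℝ (Fin M))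
    (G : EuclideanSpace ℝ (Fin M) → EuclideanSpace ℝ (Fin L))
    (ustar : EuclideanSpace ℝ (Fin M)) (R CG : ℝ)
    (hR₁ : ∀ j, ‖u₁ j - ustar‖ ≤ R) (hR₂ : ∀ j, ‖u₂ j - ustar‖ ≤ R)
    (hG : ∀ x y, ‖G x - G y‖ ≤ CG * ‖x - y‖) :
    let Cup : (Fin J → EuclideanSpace ℝ (Fin M)) → Matrix (Fin M) (Fin L) ℝ :=
      fun u => Matrix.of fun i k => (J : ℝ)⁻¹ *
        ∑ j, (u j i - ((J : ℝ)⁻¹ • ∑ j', u j') i) *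
          (G (u j) k - ((J : ℝ)⁻¹ • ∑ j', G (u j')) k)
    ‖Cup u₁ - Cup u₂‖ ≤
      2 * ((J : ℝ) + 1) * ((R + ‖ustar‖) * CG + (CG * R + ‖G ustar‖)) *
        ((J : ℝ)⁻¹ * ∑ j, ‖u₁ j - u₂ j‖) := by
  intro Cup
  obtain hCG | hCG := lt_or_ge CG 0
  · have := subsingleton_of_norm_sub_le_mul_of_neg hCG hG
    simp [Subsingleton.elim u₁ u₂]
  have hCup : ∀ u, Cup u = crossCovariance u fun j => G (u j) := fun u => by
    ext i k
    simp [Cup, crossCovariance, ensembleMean, vecMulVec_apply, Matrix.sum_apply]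
  have hu₂ : ∀ j, ‖u₂ j‖ ≤ R + ‖ustar‖ := fun j => by
    linarith [norm_le_norm_add_const_of_dist_le ((dist_eq_norm _ _).trans_le (hR₂ j))]
  have hGu₁ : ∀ j, ‖G (u₁ j)‖ ≤ CG * R + ‖G ustar‖ := fun j => by
    have hGR : dist (G (u₁ j)) (G ustar) ≤ CG * R :=
      (dist_eq_norm _ _).trans_le ((hG _ _).trans (by gcongr; exact hR₁ j))
    linarith [norm_le_norm_add_const_of_dist_le hGR]
  have hR : 0 ≤ R := (norm_nonneg _).trans (hR₁ ⟨0, hJ⟩)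
  have hD : 0 ≤ ensembleMean fun j => ‖u₁ j - u₂ j‖ := by unfold ensembleMean; positivity
  rw [hCup, hCup]
  calc _ ≤ 4 * ((R + ‖ustar‖) * CG + (CG * R + ‖G ustar‖)) *
          ensembleMean fun j => ‖u₁ j - u₂ j‖ :=
        norm_crossCovariance_sub_le hJ hu₂ hGu₁ fun j => hG _ _
    _ ≤ _ := by
        gcongr
        · linarith [(Nat.one_le_cast (α := ℝ)).mpr hJ]
        · exact le_rfl
end

section
/- Let ε, h > 0, s ≥ 0, C_ℰ > 0 and suppose ℰ₁, …, ℰ_N ∈ ℝ^L are i.i.d. random vectors with ‖ℰ_i‖₂ ≤ C_ℰ(ε + h^{s+1}) almost surely, N ≥ 2. Let Σ be the unbiased sample covariance and Σ* = 𝔼[Σ]. For α ∈ (0,1) and η > 0, if N ≥ 2304 C_ℰ⁴ (L²/η²) log(2L²/α) (ε⁴ + h^{4(s+1)}), then P(‖Σ − Σ*‖₂ ≤ η) ≥ 1 − α. -/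
/-!
Each entry of the sample covariance is a U-statistic of order two, with kernel
`(u - v)ⱼ (u - v)ₖ / 2` bounded by `K = 2 (C_ℰ (ε + h^{s+1}))²`. Following Hoeffding, a U-statistic
is the average, over all permutations of the sample, of the mean of `⌊N/2⌋` kernel values on
disjoint pairs. Such a mean is a sum of independent bounded variables, hence sub-Gaussian with
variance proxy `K² / ⌊N/2⌋` by Hoeffding's lemma, and averaging preserves this by convexity of
`exp`. A Chernoff bound for each entry, a union bound over the `L²` entries and
`‖A‖ ≤ L maxⱼₖ |Aⱼₖ|` give the claim.
-/

open MeasureTheory ProbabilityTheory Finset Real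
open scoped NNReal ENNReal Nat Matrix Matrix.Norms.L2Operator

namespace ProbabilityTheory

variable {Ω : Type*} [MeasurableSpace Ω] {μ : Measure Ω}

namespace HasSubgaussianMGF

lemma convex_combination {ι : Type*} {s : Finset ι} {w : ι → ℝ} {Y : ι → Ω → ℝ} {c : ℝ≥0}
    (hw : ∀ i ∈ s, 0 ≤ w i) (hw1 : ∑ i ∈ s, w i = 1)
    (hY : ∀ i ∈ s, HasSubgaussianMGF (Y i) c μ) :
    HasSubgaussianMGF (fun ω ↦ ∑ i ∈ s, w i * Y i ω) c μ := by
  have jensen : ∀ t ω, exp (t * ∑ i ∈ s, w i * Y i ω) ≤ ∑ i ∈ s, w i * exp (t * Y i ω) := by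
    intro t ω
    have := convexOn_exp.map_sum_le hw hw1 (p := fun i ↦ t * Y i ω) fun i _ ↦ Set.mem_univ _
    simpa [smul_eq_mul, mul_sum, mul_left_comm] using this
  have hint : ∀ t, Integrable (fun ω ↦ ∑ i ∈ s, w i * exp (t * Y i ω)) μ := fun t ↦
    integrable_finsetSum s fun i hi ↦ ((hY i hi).integrable_exp_mul t).const_mul (w i)
  refine ⟨fun t ↦ (hint t).mono' ?_ (ae_of_all _ fun ω ↦ ?_), fun t ↦ ?_⟩
  · have hsum : AEMeasurable (fun ω ↦ ∑ i ∈ s, w i * Y i ω) μ :=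
      Finset.aemeasurable_fun_sum s fun i hi ↦ (hY i hi).aemeasurable.const_mul (w i)
    exact (measurable_exp.comp_aemeasurable (hsum.const_mul t)).aestronglyMeasurable
  · rw [norm_of_nonneg (exp_pos _).le]
    exact jensen t ω
  calc mgf (fun ω ↦ ∑ i ∈ s, w i * Y i ω) μ t
      ≤ ∫ ω, ∑ i ∈ s, w i * exp (t * Y i ω) ∂μ :=
        integral_mono_of_nonneg (ae_of_all _ fun _ ↦ (exp_pos _).le) (hint t)
          (ae_of_all _ (jensen t))
    _ = ∑ i ∈ s, w i * mgf (Y i) μ t := by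
        rw [integral_finsetSum s fun i hi ↦ ((hY i hi).integrable_exp_mul t).const_mul (w i)]
        simp only [integral_const_mul, mgf]
    _ ≤ ∑ i ∈ s, w i * exp (c * t ^ 2 / 2) :=
        sum_le_sum fun i hi ↦ mul_le_mul_of_nonneg_left ((hY i hi).mgf_le t) (hw i hi)
    _ = exp (c * t ^ 2 / 2) := by rw [← sum_mul, hw1, one_mul]

lemma measure_abs_ge_le [IsFiniteMeasure μ] {X : Ω → ℝ} {c : ℝ≥0}
    (h : HasSubgaussianMGF X c μ) {ε : ℝ} (hε : 0 ≤ ε) :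
    μ.real {ω | ε ≤ |X ω|} ≤ 2 * exp (-ε ^ 2 / (2 * c)) := by
  have hsplit : {ω | ε ≤ |X ω|} = {ω | ε ≤ X ω} ∪ {ω | ε ≤ (-X) ω} := by
    ext ω
    simp [le_abs', or_comm, le_neg]
  calc μ.real {ω | ε ≤ |X ω|} ≤ μ.real {ω | ε ≤ X ω} + μ.real {ω | ε ≤ (-X) ω} :=
        hsplit ▸ measureReal_union_le _ _
    _ ≤ exp (-ε ^ 2 / (2 * c)) + exp (-ε ^ 2 / (2 * c)) :=
        add_le_add (h.measure_ge_le hε) (h.neg.measure_ge_le hε)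
    _ = 2 * exp (-ε ^ 2 / (2 * c)) := by ring

end HasSubgaussianMGF

lemma hasSubgaussianMGF_sum_sub_integral_of_mem_Icc [IsProbabilityMeasure μ] {ι : Type*}
    {Z : ι → Ω → ℝ} (hZ : iIndepFun Z μ) (hZm : ∀ i, Measurable (Z i)) {a b : ℝ}
    (hab : ∀ i, ∀ᵐ ω ∂μ, Z i ω ∈ Set.Icc a b) (s : Finset ι) :
    HasSubgaussianMGF (fun ω ↦ ∑ i ∈ s, Z i ω - μ[fun ω ↦ ∑ i ∈ s, Z i ω])
      (#s * (‖b - a‖₊ / 2) ^ 2) μ := by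
  have hint : ∀ i, Integrable (Z i) μ := fun i ↦
    Integrable.of_mem_Icc a b (hZm i).aemeasurable (hab i)
  have hcentered := hZ.comp (fun i x ↦ x - μ[Z i]) fun i ↦ measurable_id.sub_const _
  have hsum := HasSubgaussianMGF.sum_of_iIndepFun hcentered (s := s) fun i _ ↦
    hasSubgaussianMGF_of_mem_Icc (hZm i).aemeasurable (hab i)
  rw [sum_const, nsmul_eq_mul] at hsum
  refine hsum.congr (ae_of_all _ fun ω ↦ ?_)
  simp only [Function.comp_apply, sum_sub_distrib, integral_finsetSum s fun i _ ↦ hint i]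

lemma iIndepFun.curry {ι κ β : Type*} [MeasurableSpace β] {X : ι → κ → Ω → β}
    (hXm : ∀ i j, Measurable (X i j)) (h : iIndepFun (fun p : ι × κ ↦ X p.1 p.2) μ) :
    iIndepFun (fun i ω j ↦ X i j ω) μ := by
  have := h.isProbabilityMeasure
  set Y : ι × κ → Ω → β := fun p ↦ X p.1 p.2
  have hYm : ∀ p, Measurable (Y p) := fun p ↦ hXm p.1 p.2
  have _ i j := Measure.isProbabilityMeasure_map (μ := μ) (hXm i j).aemeasurable
  have hblock : ∀ i, μ.map (fun ω j ↦ X i j ω) = Measure.infinitePi (fun j ↦ μ.map (X i j)) :=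
    fun i ↦ (h.precomp (Prod.mk_right_injective i)).map_fun_eq_infinitePi_map (hXm i)
  rw [iIndepFun_iff_map_fun_eq_infinitePi_map fun i ↦ measurable_pi_lambda _ (hXm i)]
  calc μ.map (fun ω i j ↦ X i j ω)
      = (μ.map fun ω p ↦ Y p ω).map (MeasurableEquiv.curry ι κ β) := by
        rw [Measure.map_map (MeasurableEquiv.measurable _) (measurable_pi_lambda _ hYm)]
        rfl
    _ = Measure.infinitePi fun i ↦ Measure.infinitePi fun j ↦ μ.map (X i j) := by
        rw [h.map_fun_eq_infinitePi_map hYm]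
        exact Measure.infinitePi_map_curry (fun i j ↦ μ.map (X i j))
    _ = _ := by simp_rw [hblock]

end ProbabilityTheory

theorem MeasureTheory.ofReal_one_sub_le_of_compl_subset_iUnion {Ω ι : Type*} [MeasurableSpace Ω]
    {P : Measure Ω} [IsProbabilityMeasure P] [Fintype ι] {G : Set Ω} {bad : ι → Set Ω} {δ : ℝ}
    (hcover : Gᶜ ⊆ ⋃ i, bad i) (hbad : ∀ i, P.real (bad i) ≤ δ) :
    ENNReal.ofReal (1 - Fintype.card ι * δ) ≤ P G := by
  have hunion : P.real (⋃ i, bad i) ≤ Fintype.card ι * δ :=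
    (measureReal_iUnion_fintype_le _).trans ((sum_le_sum fun i _ ↦ hbad i).trans_eq (by simp))
  have huniv : P.real Set.univ ≤ P.real G + P.real (⋃ i, bad i) :=
    (measureReal_mono fun ω _ ↦ (em (ω ∈ G)).imp id fun h ↦ hcover h).trans
      (measureReal_union_le _ _)
  rw [probReal_univ] at huniv
  rw [← ofReal_measureReal]
  exact ENNReal.ofReal_le_ofReal (by linarith)

theorem Equiv.Perm.card_offDiag_smul_sum_apply {α M : Type*} [Fintype α] [DecidableEq α]
    [AddCommMonoid M] {a b : α} (hab : a ≠ b) (F : α → α → M) :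
    #(univ : Finset α).offDiag • ∑ σ : Perm α, F (σ a) (σ b) =
      (Fintype.card α)! • ∑ p ∈ univ.offDiag, F p.1 p.2 := by
  have hpair : ∀ p ∈ (univ : Finset α).offDiag,
      ∑ σ : Perm α, F (σ p.1) (σ p.2) = ∑ σ : Perm α, F (σ a) (σ b) := by
    intro p hp
    have hp' : p.1 ≠ p.2 := (mem_offDiag.1 hp).2.2
    -- `Perm α` is 2-transitive: some `τ` maps `(a, b)` to `p`, and `σ ↦ σ * τ` is a bijection.
    obtain ⟨τ, hτ⟩ := exists_extending_pair ![a, b] ![p.1, p.2]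
      (by intro i j; fin_cases i <;> fin_cases j <;> simp [hab, hab.symm])
      (by intro i j; fin_cases i <;> fin_cases j <;> simp [hp', hp'.symm])
    calc ∑ σ : Perm α, F (σ p.1) (σ p.2) = ∑ σ : Perm α, F ((σ * τ) a) ((σ * τ) b) := by
          simpa using congr(∑ σ : Perm α, F (σ $(hτ 0)) (σ $(hτ 1))).symm
      _ = ∑ σ : Perm α, F (σ a) (σ b) :=
          Equiv.sum_comp (Equiv.mulRight τ) (fun σ ↦ F (σ a) (σ b))
  have hperm : ∀ σ : Perm α,
      ∑ p ∈ (univ : Finset α).offDiag, F (σ p.1) (σ p.2) = ∑ p ∈ univ.offDiag, F p.1 p.2 :=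
    fun σ ↦ sum_nbij' (fun p ↦ (σ p.1, σ p.2)) (fun p ↦ (σ⁻¹ p.1, σ⁻¹ p.2))
      (by simp) (by simp) (by simp) (by simp) (by simp)
  calc #(univ : Finset α).offDiag • ∑ σ : Perm α, F (σ a) (σ b)
      = ∑ p ∈ (univ : Finset α).offDiag, ∑ σ : Perm α, F (σ p.1) (σ p.2) := by
        rw [sum_congr rfl hpair, sum_const]
    _ = ∑ σ : Perm α, ∑ p ∈ (univ : Finset α).offDiag, F (σ p.1) (σ p.2) := sum_comm
    _ = (Fintype.card α)! • ∑ p ∈ univ.offDiag, F p.1 p.2 := by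
        rw [sum_congr rfl fun σ _ ↦ hperm σ, sum_const, card_univ, Fintype.card_perm]

noncomputable def uStatistic {β : Type*} {N : ℕ} (g : β → β → ℝ) (x : Fin N → β) : ℝ :=
  ((N : ℝ) * (N - 1))⁻¹ * ∑ p ∈ univ.offDiag, g (x p.1) (x p.2)

-- `(r, 0) ↦ 2r` and `(r, 1) ↦ 2r + 1`.
def pairIndex (N : ℕ) : Fin (N / 2) × Fin 2 ↪ Fin N :=
  finProdFinEquiv.toEmbedding.trans (Fin.castLEEmb (Nat.div_mul_le_self N 2))

noncomputable def pairedMean {β : Type*} {N : ℕ} (g : β → β → ℝ) (x : Fin N → β) : ℝ :=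
  ((N / 2 : ℕ) : ℝ)⁻¹ * ∑ r : Fin (N / 2), g (x (pairIndex N (r, 0))) (x (pairIndex N (r, 1)))

theorem uStatistic_eq_average_pairedMean {β : Type*} {N : ℕ} (hN : 2 ≤ N) (g : β → β → ℝ)
    (x : Fin N → β) :
    uStatistic g x = ((N ! : ℕ) : ℝ)⁻¹ * ∑ σ : Equiv.Perm (Fin N), pairedMean g (x ∘ σ) := by
  have hN' : (2 : ℝ) ≤ N := by exact_mod_cast hN
  have hm : ((N / 2 : ℕ) : ℝ) ≠ 0 := Nat.cast_ne_zero.2 (by omega)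
  have hcard : (#(univ : Finset (Fin N)).offDiag : ℝ) = N * (N - 1) := by
    rw [offDiag_card, card_univ, Fintype.card_fin, Nat.cast_sub (Nat.le_mul_self N)]
    push_cast
    ring
  have hpair : ∀ r : Fin (N / 2),
      ∑ σ : Equiv.Perm (Fin N), g (x (σ (pairIndex N (r, 0)))) (x (σ (pairIndex N (r, 1)))) =
        N ! * uStatistic g x := by
    intro r
    have h := Equiv.Perm.card_offDiag_smul_sum_apply
      ((pairIndex N).injective.ne (a₁ := (r, 0)) (a₂ := (r, 1)) (by simp)) (fun i j ↦ g (x i) (x j))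
    rw [nsmul_eq_mul, nsmul_eq_mul, hcard, Fintype.card_fin] at h
    have hN1 : (N : ℝ) - 1 ≠ 0 := by linarith
    rw [uStatistic, mul_left_comm, ← h]
    field_simp
  simp only [pairedMean, Function.comp_apply, ← mul_sum]
  rw [sum_comm, sum_congr rfl fun r _ ↦ hpair r, sum_const, card_univ, Fintype.card_fin,
    nsmul_eq_mul]
  field_simp

section UStatistic

variable {Ω β : Type*} [MeasurableSpace Ω] [MeasurableSpace β] {μ : Measure Ω}
  [IsProbabilityMeasure μ] {N : ℕ} {X : Fin N → Ω → β} {g : β → β → ℝ} {K : ℝ≥0}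

theorem hasSubgaussianMGF_pairedMean_sub_integral (hX : iIndepFun X μ)
    (hXm : ∀ i, Measurable (X i)) (hg : Measurable (Function.uncurry g))
    (hK : ∀ i j, i ≠ j → ∀ᵐ ω ∂μ, |g (X i ω) (X j ω)| ≤ K) (hN : 2 ≤ N) :
    HasSubgaussianMGF (fun ω ↦ pairedMean g (X · ω) - μ[fun ω ↦ pairedMean g (X · ω)])
      (K ^ 2 / (N / 2 : ℕ)) μ := by
  set m := N / 2
  have hm : (0 : ℝ) < m := Nat.cast_pos.2 (by omega)
  set ι := pairIndex N
  let Z : Fin m → Ω → ℝ := fun r ω ↦ (m : ℝ)⁻¹ * g (X (ι (r, 0)) ω) (X (ι (r, 1)) ω)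
  have hblocks := iIndepFun.curry (X := fun r i ↦ X (ι (r, i))) (fun _ _ ↦ hXm _)
    (hX.precomp ι.injective)
  have hZ : iIndepFun Z μ := hblocks.comp (fun _ v ↦ (m : ℝ)⁻¹ * g (v 0) (v 1))
    fun _ ↦ (hg.comp (f := fun v : Fin 2 → β ↦ (v 0, v 1)) (by fun_prop)).const_mul _
  have hZm : ∀ r, Measurable (Z r) := fun r ↦
    (hg.comp (f := fun ω ↦ (X (ι (r, 0)) ω, X (ι (r, 1)) ω)) (by fun_prop)).const_mul _
  have hZb : ∀ r, ∀ᵐ ω ∂μ, Z r ω ∈ Set.Icc (-(K / m : ℝ)) (K / m) := by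
    intro r
    filter_upwards [hK _ _ (ι.injective.ne (a₁ := (r, 0)) (a₂ := (r, 1)) (by simp))] with ω hω
    rw [Set.mem_Icc, ← abs_le, abs_mul, abs_inv, Nat.abs_cast, inv_mul_eq_div]
    exact div_le_div_of_nonneg_right hω hm.le
  have hparam : (#(univ : Finset (Fin m)) : ℝ≥0) * (‖(K / m : ℝ) - -(K / m)‖₊ / 2) ^ 2 =
      K ^ 2 / m := by
    ext
    simp only [card_univ, Fintype.card_fin, NNReal.coe_mul, NNReal.coe_natCast, NNReal.coe_pow,
      NNReal.coe_div, coe_nnnorm, Real.norm_eq_abs, sub_neg_eq_add]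
    rw [abs_of_nonneg (by positivity)]
    field_simp
    norm_num
  have h := hasSubgaussianMGF_sum_sub_integral_of_mem_Icc hZ hZm hZb univ
  rw [hparam] at h
  refine h.congr (ae_of_all _ fun ω ↦ ?_)
  simp only [pairedMean, mul_sum, Z]
  rfl

theorem hasSubgaussianMGF_uStatistic_sub_integral (hX : iIndepFun X μ)
    (hXm : ∀ i, Measurable (X i)) (hg : Measurable (Function.uncurry g))
    (hK : ∀ i j, i ≠ j → ∀ᵐ ω ∂μ, |g (X i ω) (X j ω)| ≤ K) (hN : 2 ≤ N) :
    HasSubgaussianMGF (fun ω ↦ uStatistic g (X · ω) - μ[fun ω ↦ uStatistic g (X · ω)])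
      (K ^ 2 / (N / 2 : ℕ)) μ := by
  let P : Equiv.Perm (Fin N) → Ω → ℝ := fun σ ω ↦ pairedMean g ((X · ω) ∘ σ)
  have hP : ∀ σ, HasSubgaussianMGF (fun ω ↦ P σ ω - μ[P σ]) (K ^ 2 / (N / 2 : ℕ)) μ :=
    fun σ ↦ hasSubgaussianMGF_pairedMean_sub_integral (hX.precomp σ.injective)
      (fun _ ↦ hXm _) hg (fun _ _ hij ↦ hK _ _ (σ.injective.ne hij)) hN
  have hPint : ∀ σ, Integrable (P σ) μ := fun σ ↦
    ((hP σ).integrable.add (integrable_const μ[P σ])).congr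
      (ae_of_all _ fun _ ↦ sub_add_cancel _ _)
  have hw : ∑ _σ : Equiv.Perm (Fin N), ((N ! : ℕ) : ℝ)⁻¹ = 1 := by
    rw [sum_const, card_univ, Fintype.card_perm, Fintype.card_fin, nsmul_eq_mul]
    exact mul_inv_cancel₀ (by positivity)
  have havg := HasSubgaussianMGF.convex_combination (fun _ _ ↦ by positivity) hw
    fun σ _ ↦ hP σ
  have hU : ∀ ω, uStatistic g (X · ω) = ((N ! : ℕ) : ℝ)⁻¹ * ∑ σ, P σ ω := fun ω ↦
    uStatistic_eq_average_pairedMean hN g (X · ω)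
  refine havg.congr (ae_of_all _ fun ω ↦ ?_)
  simp only [hU, integral_const_mul, integral_finsetSum _ fun σ _ ↦ hPint σ, ← mul_sum,
    ← mul_sub, sum_sub_distrib]

end UStatistic

noncomputable def covKernel (u v : ℝ × ℝ) : ℝ := (u.1 - v.1) * (u.2 - v.2) / 2

theorem uStatistic_covKernel {N : ℕ} (x y : Fin N → ℝ) :
    uStatistic covKernel (fun i ↦ (x i, y i)) =
      ((N : ℝ) - 1)⁻¹ * ∑ i, (x i - (N : ℝ)⁻¹ * ∑ n, x n) * (y i - (N : ℝ)⁻¹ * ∑ n, y n) := by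
  have hoff : ∑ p ∈ (univ : Finset (Fin N)).offDiag, covKernel (x p.1, y p.1) (x p.2, y p.2) =
      ∑ i, ∑ l, covKernel (x i, y i) (x l, y l) := by
    rw [← sum_product']
    refine sum_subset (fun p hp ↦ by simp) fun p _ hp ↦ ?_
    have hdiag : p.1 = p.2 := by simpa using hp
    simp [covKernel, hdiag]
  have hdouble : ∑ i, ∑ l, covKernel (x i, y i) (x l, y l) =
      N * ∑ i, x i * y i - (∑ i, x i) * ∑ i, y i := by
    simp only [covKernel, ← sum_div, sub_mul, mul_sub, sum_sub_distrib, sum_const, card_univ,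
      Fintype.card_fin, nsmul_eq_mul, ← mul_sum, ← sum_mul]
    ring
  rw [uStatistic, hoff, hdouble]
  rcases Nat.lt_or_ge N 2 with hN | hN
  · interval_cases N <;> simp
  have hN' : (2 : ℝ) ≤ N := by exact_mod_cast hN
  have hN1 : (N : ℝ) - 1 ≠ 0 := by linarith
  simp only [sub_mul, mul_sub, sum_sub_distrib, sum_const, card_univ, Fintype.card_fin,
    nsmul_eq_mul, ← mul_sum, ← sum_mul]
  field_simp
  ring

theorem abs_covKernel_le {u v : ℝ × ℝ} {B : ℝ} (hu₁ : |u.1| ≤ B) (hu₂ : |u.2| ≤ B)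
    (hv₁ : |v.1| ≤ B) (hv₂ : |v.2| ≤ B) : |covKernel u v| ≤ 2 * B ^ 2 := by
  have h₁ : |u.1 - v.1| ≤ 2 * B := (abs_sub _ _).trans (by linarith)
  have h₂ : |u.2 - v.2| ≤ 2 * B := (abs_sub _ _).trans (by linarith)
  rw [covKernel, abs_div, abs_mul, abs_two]
  nlinarith [abs_nonneg (u.1 - v.1), abs_nonneg (u.2 - v.2)]

noncomputable def sampleCov {L : ℕ} (N : ℕ) (x : ℕ → EuclideanSpace ℝ (Fin L)) :
    Matrix (Fin L) (Fin L) ℝ := fun j k ↦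
  ((N : ℝ) - 1)⁻¹ * ∑ i ∈ range N,
    (x i j - ((N : ℝ)⁻¹ • ∑ n ∈ range N, x n) j) * (x i k - ((N : ℝ)⁻¹ • ∑ n ∈ range N, x n) k)

theorem sampleCov_apply_eq_uStatistic {L N : ℕ} (x : ℕ → EuclideanSpace ℝ (Fin L)) (j k : Fin L) :
    sampleCov N x j k = uStatistic covKernel (fun i : Fin N ↦ (x i j, x i k)) := by
  rw [uStatistic_covKernel, sampleCov]
  simp only [sum_range, PiLp.smul_apply, WithLp.ofLp_sum, Finset.sum_apply, smul_eq_mul]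

theorem measureReal_abs_sampleCov_sub_integral_ge_le {Ω : Type*} [MeasurableSpace Ω]
    {P : Measure Ω} [IsProbabilityMeasure P] {L N : ℕ} (hN : 2 ≤ N)
    {E : ℕ → Ω → EuclideanSpace ℝ (Fin L)} (hmeas : ∀ i, Measurable (E i))
    (hindep : iIndepFun E P) {B : ℝ} (hbound : ∀ i, ∀ᵐ ω ∂P, ‖E i ω‖ ≤ B) (j k : Fin L)
    {t : ℝ} (ht : 0 ≤ t) :
    P.real {ω | t ≤ |sampleCov N (E · ω) j k - ∫ ω, sampleCov N (E · ω) j k ∂P|} ≤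
      2 * exp (-t ^ 2 / (2 * ((2 * B ^ 2) ^ 2 / (N / 2 : ℕ)))) := by
  let Y : Fin N → Ω → ℝ × ℝ := fun i ω ↦ (E i ω j, E i ω k)
  have hY : iIndepFun Y P :=
    (hindep.precomp Fin.val_injective).comp (fun _ v ↦ (v j, v k)) fun _ ↦ by fun_prop
  let K : ℝ≥0 := ⟨2 * B ^ 2, by positivity⟩
  have hK : (K : ℝ) = 2 * B ^ 2 := rfl
  have hYb : ∀ i l, i ≠ l → ∀ᵐ ω ∂P, |covKernel (Y i ω) (Y l ω)| ≤ K := by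
    intro i l _
    filter_upwards [hbound i, hbound l] with ω hi hl
    exact abs_covKernel_le ((PiLp.norm_apply_le _ _).trans hi) ((PiLp.norm_apply_le _ _).trans hi)
      ((PiLp.norm_apply_le _ _).trans hl) ((PiLp.norm_apply_le _ _).trans hl)
  have h := (hasSubgaussianMGF_uStatistic_sub_integral hY (fun i ↦ by fun_prop)
    (by unfold covKernel; fun_prop) hYb hN).measure_abs_ge_le ht
  simp only [sampleCov_apply_eq_uStatistic]
  exact h.trans_eq (by rw [NNReal.coe_div, NNReal.coe_pow, hK, NNReal.coe_natCast])

theorem Matrix.l2_opNorm_le_of_norm_le {𝕜 m n : Type*} [RCLike 𝕜] [Fintype m] [Fintype n]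
    [DecidableEq n] {A : Matrix m n 𝕜} {t : ℝ} (ht : 0 ≤ t) (hA : ∀ i j, ‖A i j‖ ≤ t) :
    ‖A‖ ≤ √(Fintype.card m * Fintype.card n) * t := by
  rw [l2_opNorm_def]
  refine ContinuousLinearMap.opNorm_le_bound _ (by positivity) fun x ↦ ?_
  refine (sq_le_sq₀ (by positivity) (by positivity)).mp ?_
  have hrow : ∀ i, ‖(A *ᵥ x.ofLp) i‖ ^ 2 ≤ Fintype.card n * t ^ 2 * ‖x‖ ^ 2 := by
    intro i
    have hi : ‖(A *ᵥ x.ofLp) i‖ ≤ t * ∑ j, ‖x j‖ := by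
      rw [mulVec, dotProduct, mul_sum]
      exact (norm_sum_le _ _).trans <| sum_le_sum fun j _ ↦
        (norm_mul_le _ _).trans (mul_le_mul_of_nonneg_right (hA i j) (norm_nonneg _))
    have hx : (∑ j, ‖x j‖) ^ 2 ≤ Fintype.card n * ‖x‖ ^ 2 := by
      rw [EuclideanSpace.norm_sq_eq]
      simpa using sq_sum_le_card_mul_sum_sq (s := univ) (f := fun j ↦ ‖x j‖)
    calc ‖(A *ᵥ x.ofLp) i‖ ^ 2 ≤ t ^ 2 * (∑ j, ‖x j‖) ^ 2 := by
          rw [← mul_pow]; gcongr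
      _ ≤ t ^ 2 * (Fintype.card n * ‖x‖ ^ 2) := by gcongr
      _ = Fintype.card n * t ^ 2 * ‖x‖ ^ 2 := by ring
  rw [EuclideanSpace.norm_sq_eq]
  simp only [LinearEquiv.trans_apply, LinearMap.coe_toContinuousLinearMap', toLpLin_apply]
  calc ∑ i, ‖(A *ᵥ x.ofLp) i‖ ^ 2 ≤ ∑ _i : m, Fintype.card n * t ^ 2 * ‖x‖ ^ 2 :=
        sum_le_sum fun i _ ↦ hrow i
    _ = (√(Fintype.card m * Fintype.card n) * t * ‖x‖) ^ 2 := by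
        rw [sum_const, card_univ, nsmul_eq_mul, mul_pow, mul_pow, Real.sq_sqrt (by positivity)]
        ring

theorem two_mul_exp_le_of_sample_size {L N : ℕ} (hL : 0 < L) (hN : 2 ≤ N) {ε h s CE α η : ℝ}
    (hε : 0 < ε) (hh : 0 < h) (hCE : 0 < CE) (hα : α ∈ Set.Ioo (0 : ℝ) 1) (hη : 0 < η)
    (hNbig : (N : ℝ) ≥ 2304 * CE ^ 4 * ((L : ℝ) ^ 2 / η ^ 2) * log (2 * L ^ 2 / α) *
      (ε ^ 4 + h ^ (4 * (s + 1)))) :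
    2 * exp (-(η / L) ^ 2 / (2 * ((2 * (CE * (ε + h ^ (s + 1))) ^ 2) ^ 2 / (N / 2 : ℕ)))) ≤
      α / L ^ 2 := by
  obtain ⟨hα0, hα1⟩ := hα
  set d := h ^ (s + 1)
  have hd : 0 < d := rpow_pos_of_pos hh _
  have hd4 : h ^ (4 * (s + 1)) = d ^ 4 := by
    rw [mul_comm, rpow_mul hh.le]
    exact_mod_cast rpow_natCast d 4
  set B := CE * (ε + d)
  have hB : 0 < B := by positivity
  have hB4 : B ^ 4 ≤ 8 * CE ^ 4 * (ε ^ 4 + d ^ 4) := by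
    calc B ^ 4 = CE ^ 4 * (ε + d) ^ 4 := mul_pow _ _ _
      _ ≤ CE ^ 4 * (2 ^ 3 * (ε ^ 4 + d ^ 4)) := by gcongr; exact add_pow_le hε.le hd.le 4
      _ = 8 * CE ^ 4 * (ε ^ 4 + d ^ 4) := by ring
  set m : ℝ := ((N / 2 : ℕ) : ℝ)
  have hm : (N : ℝ) ≤ 4 * m := by
    have : N ≤ 4 * (N / 2) := by omega
    simpa [m] using (Nat.cast_le (α := ℝ)).2 this
  have hL' : (1 : ℝ) ≤ L := by exact_mod_cast hL
  set Λ := log (2 * L ^ 2 / α)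
  have hΛ : 0 ≤ Λ := log_nonneg (by rw [le_div_iff₀ hα0]; nlinarith)
  have hsample : 2304 * CE ^ 4 * L ^ 2 * Λ * (ε ^ 4 + d ^ 4) ≤ η ^ 2 * N := by
    rw [hd4] at hNbig
    have := mul_le_mul_of_nonneg_left hNbig (sq_nonneg η)
    rwa [show η ^ 2 * (2304 * CE ^ 4 * (L ^ 2 / η ^ 2) * Λ * (ε ^ 4 + d ^ 4)) =
      2304 * CE ^ 4 * L ^ 2 * Λ * (ε ^ 4 + d ^ 4) by field_simp] at this
  -- With `B⁴ ≤ 8 CE⁴ (ε⁴ + d⁴)` and `N ≤ 4m`, the hypothesis makes the exponent at least `9 Λ`.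
  have hrate : Λ ≤ (η / L) ^ 2 / (2 * ((2 * B ^ 2) ^ 2 / m)) := by
    rw [show (η / L) ^ 2 / (2 * ((2 * B ^ 2) ^ 2 / m)) = η ^ 2 * m / (8 * L ^ 2 * B ^ 4) by
      field_simp; ring, le_div_iff₀ (by positivity)]
    have : Λ * (8 * L ^ 2 * B ^ 4) ≤ Λ * (8 * L ^ 2 * (8 * CE ^ 4 * (ε ^ 4 + d ^ 4))) := by
      gcongr
    nlinarith [mul_nonneg (mul_nonneg (pow_nonneg hCE.le 4) (sq_nonneg (L : ℝ)))
      (mul_nonneg hΛ (by positivity : (0 : ℝ) ≤ ε ^ 4 + d ^ 4))]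
  calc 2 * exp (-(η / L) ^ 2 / (2 * ((2 * B ^ 2) ^ 2 / m))) ≤ 2 * exp (-Λ) := by
        rw [neg_div]; gcongr
    _ = α / L ^ 2 := by
        rw [exp_neg, exp_log (by positivity), inv_div]
        field_simp

theorem modelling_error_covariance_sample_complexity_general {L : ℕ} (hL : 0 < L)
    {Ω : Type*} [MeasurableSpace Ω] (P : Measure Ω) [IsProbabilityMeasure P]
    (N : ℕ) (hN : 2 ≤ N)
    (E : ℕ → Ω → EuclideanSpace ℝ (Fin L))
    (hmeas : ∀ i, Measurable (E i))
    (hindep : iIndepFun E P)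
    (ε h s CE : ℝ) (hε : 0 < ε) (hh : 0 < h) (hCE : 0 < CE)
    (hbound : ∀ i, ∀ᵐ ω ∂P, ‖E i ω‖ ≤ CE * (ε + h ^ (s + 1)))
    -- the unbiased sample covariance matrix
    (Scov : Ω → Matrix (Fin L) (Fin L) ℝ)
    (hScov : ∀ ω j k, Scov ω j k = ((N : ℝ) - 1)⁻¹ *
      ∑ i ∈ Finset.range N,
        (E i ω j - ((N : ℝ)⁻¹ • ∑ n ∈ Finset.range N, E n ω) j) *
        (E i ω k - ((N : ℝ)⁻¹ • ∑ n ∈ Finset.range N, E n ω) k))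
    -- its expectation
    (Sstar : Matrix (Fin L) (Fin L) ℝ)
    (hSstar : ∀ j k, Sstar j k = ∫ ω, Scov ω j k ∂P)
    (α η : ℝ) (hα : α ∈ Set.Ioo (0 : ℝ) 1) (hη : 0 < η)
    (hNbig : (N : ℝ) ≥
      2304 * CE ^ 4 * ((L : ℝ) ^ 2 / η ^ 2) * Real.log (2 * L ^ 2 / α) *
        (ε ^ 4 + h ^ (4 * (s + 1)))) :
    ENNReal.ofReal (1 - α) ≤ P {ω | ‖Scov ω - Sstar‖ ≤ η} := by
  obtain rfl : Scov = fun ω ↦ sampleCov N (E · ω) := funext fun ω ↦ Matrix.ext (hScov ω)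
  beta_reduce at hSstar ⊢
  set t := η / L
  have hentry : ∀ p : Fin L × Fin L,
      P.real {ω | t ≤ |sampleCov N (E · ω) p.1 p.2 - Sstar p.1 p.2|} ≤ α / L ^ 2 := fun p ↦ by
    rw [hSstar]
    exact (measureReal_abs_sampleCov_sub_integral_ge_le hN hmeas hindep hbound p.1 p.2
      (by positivity)).trans (two_mul_exp_le_of_sample_size hL hN hε hh hCE hα hη hNbig)
  have hcover : {ω | ‖sampleCov N (E · ω) - Sstar‖ ≤ η}ᶜ ⊆
      ⋃ p : Fin L × Fin L, {ω | t ≤ |sampleCov N (E · ω) p.1 p.2 - Sstar p.1 p.2|} := by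
    intro ω hω
    by_contra hsmall
    simp only [Set.mem_iUnion, Set.mem_ofPred_eq, not_exists, not_le] at hsmall
    refine hω ((Matrix.l2_opNorm_le_of_norm_le (t := t) (by positivity) fun j k ↦
      (hsmall (j, k)).le).trans_eq ?_)
    simp only [Fintype.card_fin, ← sq, Nat.cast_nonneg, sqrt_sq, t]
    field_simp
  calc ENNReal.ofReal (1 - α)
      = ENNReal.ofReal (1 - Fintype.card (Fin L × Fin L) * (α / L ^ 2)) := by
        simp only [Fintype.card_prod, Fintype.card_fin, Nat.cast_mul]
        field_simp
    _ ≤ P {ω | ‖sampleCov N (E · ω) - Sstar‖ ≤ η} :=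
        ofReal_one_sub_le_of_compl_subset_iUnion hcover hentry

theorem modelling_error_covariance_sample_complexity {L : ℕ} (hL : 0 < L)
    {Ω : Type*} [MeasurableSpace Ω] (P : Measure Ω) [IsProbabilityMeasure P]
    (N : ℕ) (hN : 2 ≤ N)
    (E : ℕ → Ω → EuclideanSpace ℝ (Fin L))
    (hmeas : ∀ i, Measurable (E i))
    (hindep : iIndepFun E P)
    (hident : ∀ i, P.map (E i) = P.map (E 0))
    (ε h s CE : ℝ) (hε : 0 < ε) (hh : 0 < h) (hs : 0 ≤ s) (hCE : 0 < CE)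
    (hbound : ∀ i, ∀ᵐ ω ∂P, ‖E i ω‖ ≤ CE * (ε + h ^ (s + 1)))
    -- the unbiased sample covariance matrix
    (Scov : Ω → Matrix (Fin L) (Fin L) ℝ)
    (hScov : ∀ ω j k, Scov ω j k = ((N : ℝ) - 1)⁻¹ *
      ∑ i ∈ Finset.range N,
        (E i ω j - ((N : ℝ)⁻¹ • ∑ n ∈ Finset.range N, E n ω) j) *
        (E i ω k - ((N : ℝ)⁻¹ • ∑ n ∈ Finset.range N, E n ω) k))
    -- its expectation
    (Sstar : Matrix (Fin L) (Fin L) ℝ)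
    (hSstar : ∀ j k, Sstar j k = ∫ ω, Scov ω j k ∂P)
    (α η : ℝ) (hα : α ∈ Set.Ioo (0 : ℝ) 1) (hη : 0 < η)
    (hNbig : (N : ℝ) ≥
      2304 * CE ^ 4 * ((L : ℝ) ^ 2 / η ^ 2) * Real.log (2 * L ^ 2 / α) *
        (ε ^ 4 + h ^ (4 * (s + 1)))) :
    ENNReal.ofReal (1 - α) ≤ P {ω | ‖Scov ω - Sstar‖ ≤ η} :=
  modelling_error_covariance_sample_complexity_general hL P N hN E hmeas hindep ε h s CE hε hh hCE
    hbound Scov hScov Sstar hSstar α η hα hη hNbig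
end
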